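/- arXiv:1903.12044 — 2 statements merged into one kernel-verified Lean document; each statement's English description precedes it below -/
import Mathlib

section
/- Let Π = Z·π be an unnormalised density (Z > 0, π a probability density), q a proposal density with E_q[(Π/q)²] < ∞, and x^{(1)},…,x^{(N)} i.i.d. from q. Define self-normalised weights 𝗐^{(i)} = W(x^{(i)})/∑_j W(x^{(j)}) with W(x) = Π(x)/q(x). Then for any bounded φ, E[((φ,π) − ∑_i 𝗐^{(i)}φ(x^{(i)}))²] ≤ 4‖φ‖_∞² ρ / N, where ρ = E_q[π²(X)/q²(X)]. -/
/-!
With the normalised weight `w = π / q`, put `S = ∑ᵢ w(xᵢ)` and `T = ∑ᵢ w(xᵢ) φ(xᵢ)`. Then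
`S / N` and `T / N` are plain Monte Carlo estimates of `E_q[w] = 1` and `E_q[w φ] = (φ, π)`, so by
independence their mean square errors are at most `ρ / N` and `‖φ‖_∞² ρ / N`. The SNIS estimate
`R = T / S` is a convex combination of values of `φ`, so `|R| ≤ ‖φ‖_∞`, and `R S = T` gives
`(φ, π) - R = ((φ, π) - T / N) + R (S / N - 1)`; squaring with `(a + b)² ≤ 2a² + 2b²` yields the
constant `4`. The scale `Z` of `Π` cancels in the self-normalised weights.
-/

open MeasureTheory ProbabilityTheory

section SampleMean

variable {Ω X ι : Type*} [MeasurableSpace Ω] [MeasurableSpace X] [Fintype ι]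
  {P : Measure Ω} {ν : Measure X} {Xs : ι → Ω → X} {h : X → ℝ}

lemma memLp_sum_comp (hXs : ∀ i, MeasurePreserving (Xs i) P ν) (hL2 : MemLp h 2 ν) :
    MemLp (fun ω => ∑ i, h (Xs i ω)) 2 P :=
  memLp_finsetSum _ fun i _ => hL2.comp_measurePreserving (hXs i)

lemma integrable_sq_sum_comp_div_sub [IsFiniteMeasure P]
    (hXs : ∀ i, MeasurePreserving (Xs i) P ν) (hL2 : MemLp h 2 ν) (n c : ℝ) :
    Integrable (fun ω => ((∑ i, h (Xs i ω)) / n - c) ^ 2) P := by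
  simpa only [div_eq_inv_mul, Pi.sub_apply] using
    (((memLp_sum_comp hXs hL2).const_mul n⁻¹).sub (memLp_const c)).integrable_sq

lemma variance_sum_comp_of_iIndepFun (hXs : ∀ i, MeasurePreserving (Xs i) P ν)
    (hiid : iIndepFun Xs P) (hm : Measurable h) (hL2 : MemLp h 2 ν) :
    Var[fun ω => ∑ i, h (Xs i ω); P] = Fintype.card ι * Var[h; ν] := by
  have hsum : (fun ω => ∑ i, h (Xs i ω)) = ∑ i, h ∘ Xs i := by ext; simp
  rw [hsum, IndepFun.variance_sum (fun i _ => hL2.comp_measurePreserving (hXs i))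
    fun i _ j _ hij => (hiid.comp (fun _ => h) fun _ => hm).indepFun hij]
  simp [Function.comp_def, (hXs _).variance_fun_comp hm.aemeasurable]

lemma integral_sq_sampleMean_sub_le [IsProbabilityMeasure P] [Nonempty ι]
    (hXs : ∀ i, MeasurePreserving (Xs i) P ν) (hiid : iIndepFun Xs P)
    (hm : Measurable h) (hL2 : MemLp h 2 ν) :
    ∫ ω, ((∑ i, h (Xs i ω)) / Fintype.card ι - ∫ x, h x ∂ν) ^ 2 ∂P
      ≤ (∫ x, h x ^ 2 ∂ν) / Fintype.card ι := by
  have : IsProbabilityMeasure ν :=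
    (hXs (Classical.arbitrary ι)).map_eq ▸ Measure.isProbabilityMeasure_map (hXs _).aemeasurable
  set n : ℝ := (Fintype.card ι : ℝ)
  have hn : n ≠ 0 := Nat.cast_ne_zero.mpr Fintype.card_ne_zero
  have hsum_mean : ∫ ω, ∑ i, h (Xs i ω) ∂P = n * ∫ x, h x ∂ν := by
    have hcomp (i : ι) : ∫ ω, h (Xs i ω) ∂P = ∫ x, h x ∂ν := by
      rw [← (hXs i).map_eq, integral_map (hXs i).aemeasurable hm.aestronglyMeasurable]
    rw [integral_finsetSum (f := fun i ω => h (Xs i ω)) _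
      fun i _ => (hL2.comp_measurePreserving (hXs i)).integrable one_le_two]
    simp [hcomp, n]
  calc ∫ ω, ((∑ i, h (Xs i ω)) / n - ∫ x, h x ∂ν) ^ 2 ∂P
      = Var[fun ω => ∑ i, h (Xs i ω); P] / n ^ 2 := by
        rw [variance_eq_integral (memLp_sum_comp hXs hL2).aemeasurable, hsum_mean, ← integral_div]
        congr 1 with ω
        field_simp
    _ = Var[h; ν] / n := by
        rw [variance_sum_comp_of_iIndepFun hXs hiid hm hL2, sq, mul_div_mul_left _ _ hn]
    _ ≤ (∫ x, h x ^ 2 ∂ν) / n := by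
        gcongr
        exact variance_le_expectation_sq hm.aestronglyMeasurable

end SampleMean

section SelfNormalized

variable {ι : Type*} [Fintype ι]

noncomputable def selfNormalizedSum (w f : ι → ℝ) : ℝ := ∑ i, w i / (∑ j, w j) * f i

lemma selfNormalizedSum_const_mul {c : ℝ} (hc : c ≠ 0) (w f : ι → ℝ) :
    selfNormalizedSum (fun i => c * w i) f = selfNormalizedSum w f := by
  simp only [selfNormalizedSum, ← Finset.mul_sum, mul_div_mul_left _ _ hc]

variable {w f : ι → ℝ}

lemma selfNormalizedSum_mul_sum (hw : ∀ i, 0 ≤ w i) :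
    selfNormalizedSum w f * ∑ j, w j = ∑ i, w i * f i := by
  by_cases hS : ∑ j, w j = 0
  · have hw0 := (Finset.sum_eq_zero_iff_of_nonneg fun i _ => hw i).mp hS
    simp [hw0]
  · simp only [selfNormalizedSum, Finset.sum_mul]
    refine Finset.sum_congr rfl fun i _ => ?_
    field_simp

lemma abs_selfNormalizedSum_le {B : ℝ} (hw : ∀ i, 0 ≤ w i) (hf : ∀ i, |f i| ≤ B)
    (hB : 0 ≤ B) :
    |selfNormalizedSum w f| ≤ B := by
  set S := ∑ j, w j
  have hS : 0 ≤ S := Finset.sum_nonneg fun i _ => hw i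
  calc |selfNormalizedSum w f| ≤ ∑ i, w i / S * B := by
        refine (Finset.abs_sum_le_sum_abs _ _).trans (Finset.sum_le_sum fun i _ => ?_)
        rw [abs_mul, abs_of_nonneg (div_nonneg (hw i) hS)]
        exact mul_le_mul_of_nonneg_left (hf i) (div_nonneg (hw i) hS)
    _ = S / S * B := by rw [← Finset.sum_mul, ← Finset.sum_div]
    _ ≤ B := mul_le_of_le_one_left hB (div_self_le_one S)

lemma sq_sub_selfNormalizedSum_le {B : ℝ} (hw : ∀ i, 0 ≤ w i) (hf : ∀ i, |f i| ≤ B) (hB : 0 ≤ B)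
    (I n : ℝ) :
    (I - selfNormalizedSum w f) ^ 2
      ≤ 2 * ((∑ i, w i * f i) / n - I) ^ 2 + 2 * B ^ 2 * ((∑ i, w i) / n - 1) ^ 2 := by
  set R := selfNormalizedSum w f
  have hdecomp : I - R = (I - (∑ i, w i * f i) / n) + R * ((∑ i, w i) / n - 1) := by
    rw [mul_sub, ← mul_div_assoc, selfNormalizedSum_mul_sum hw]
    ring
  have hR2 : R ^ 2 ≤ B ^ 2 := sq_le_sq' (abs_le.mp (abs_selfNormalizedSum_le hw hf hB)).1
    (abs_le.mp (abs_selfNormalizedSum_le hw hf hB)).2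
  calc (I - R) ^ 2
      ≤ 2 * ((I - (∑ i, w i * f i) / n) ^ 2 + (R * ((∑ i, w i) / n - 1)) ^ 2) := by
        rw [hdecomp]; exact add_sq_le
    _ ≤ 2 * ((∑ i, w i * f i) / n - I) ^ 2 + 2 * B ^ 2 * ((∑ i, w i) / n - 1) ^ 2 := by
        linarith [mul_le_mul_of_nonneg_right hR2 (sq_nonneg ((∑ i, w i) / n - 1))]

end SelfNormalized

section Density

variable {X : Type*} [MeasurableSpace X] {μ : Measure X} {q : X → ℝ}

lemma integral_withDensity_ofReal (hqm : Measurable q) (hq0 : ∀ x, 0 ≤ q x) (f : X → ℝ) :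
    ∫ x, f x ∂μ.withDensity (fun x => ENNReal.ofReal (q x)) = ∫ x, q x * f x ∂μ := by
  rw [integral_withDensity_eq_integral_toReal_smul hqm.ennreal_ofReal
    (ae_of_all _ fun _ => ENNReal.ofReal_lt_top)]
  simp [ENNReal.toReal_ofReal (hq0 _)]

lemma integral_div_mul_withDensity (hqm : Measurable q) (hq0 : ∀ x, 0 ≤ q x) {p : X → ℝ}
    (hpq : ∀ x, q x = 0 → p x = 0) (f : X → ℝ) :
    ∫ x, p x / q x * f x ∂μ.withDensity (fun x => ENNReal.ofReal (q x)) = ∫ x, f x * p x ∂μ := by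
  rw [integral_withDensity_ofReal hqm hq0]
  congr 1 with x
  rcases eq_or_ne (q x) 0 with hx | hx
  · simp [hx, hpq x hx]
  · field_simp

end Density

section MeanSquareError

variable {Ω X ι : Type*} [MeasurableSpace Ω] [MeasurableSpace X] [Fintype ι] [Nonempty ι]
  {P : Measure Ω} [IsProbabilityMeasure P] {ν : Measure X} {Xs : ι → Ω → X}

theorem integral_sq_sub_selfNormalizedSum_le (hXs : ∀ i, MeasurePreserving (Xs i) P ν)
    (hiid : iIndepFun Xs P) {w f : X → ℝ} (hwm : Measurable w) (hw0 : ∀ x, 0 ≤ w x)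
    (hwL2 : MemLp w 2 ν) (hw1 : ∫ x, w x ∂ν = 1) (hfm : Measurable f) {B : ℝ}
    (hf : ∀ x, |f x| ≤ B) :
    ∫ ω, (∫ x, w x * f x ∂ν - selfNormalizedSum (fun i => w (Xs i ω)) fun i => f (Xs i ω)) ^ 2 ∂P
      ≤ 4 * B ^ 2 * (∫ x, w x ^ 2 ∂ν) / Fintype.card ι := by
  set n : ℝ := (Fintype.card ι : ℝ)
  set I := ∫ x, w x * f x ∂ν
  have hwfL2 : MemLp (fun x => w x * f x) 2 ν :=
    hwL2.of_le_mul (hwm.mul hfm).aestronglyMeasurable (ae_of_all _ fun x => by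
      simpa [abs_mul, mul_comm] using mul_le_mul_of_nonneg_left (hf x) (abs_nonneg (w x)))
  have hwf2 : ∫ x, (w x * f x) ^ 2 ∂ν ≤ B ^ 2 * ∫ x, w x ^ 2 ∂ν := by
    rw [← integral_const_mul]
    refine integral_mono hwfL2.integrable_sq (hwL2.integrable_sq.const_mul _) fun x => ?_
    rw [mul_pow, mul_comm (B ^ 2)]
    exact mul_le_mul_of_nonneg_left (sq_le_sq' (abs_le.mp (hf x)).1 (abs_le.mp (hf x)).2)
      (sq_nonneg _)
  have hT :=
    integral_sq_sampleMean_sub_le (h := fun x => w x * f x) hXs hiid (hwm.mul hfm) hwfL2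
  have hS := integral_sq_sampleMean_sub_le hXs hiid hwm hwL2
  rw [hw1] at hS
  have hTint := integrable_sq_sum_comp_div_sub hXs hwfL2 n I
  have hSint := integrable_sq_sum_comp_div_sub hXs hwL2 n 1
  calc ∫ ω, (I - selfNormalizedSum (fun i => w (Xs i ω)) fun i => f (Xs i ω)) ^ 2 ∂P
      ≤ ∫ ω, (2 * ((∑ i, w (Xs i ω) * f (Xs i ω)) / n - I) ^ 2
          + 2 * B ^ 2 * ((∑ i, w (Xs i ω)) / n - 1) ^ 2) ∂P := by
        refine integral_mono_of_nonneg (ae_of_all _ fun _ => sq_nonneg _)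
          ((hTint.const_mul 2).add (hSint.const_mul _)) (ae_of_all _ fun ω => ?_)
        exact sq_sub_selfNormalizedSum_le (fun i => hw0 _) (fun i => hf _)
          ((abs_nonneg _).trans (hf (Xs (Classical.arbitrary ι) ω))) I n
    _ = 2 * ∫ ω, ((∑ i, w (Xs i ω) * f (Xs i ω)) / n - I) ^ 2 ∂P
          + 2 * B ^ 2 * ∫ ω, ((∑ i, w (Xs i ω)) / n - 1) ^ 2 ∂P := by
        rw [integral_add (hTint.const_mul 2) (hSint.const_mul _), integral_const_mul,
          integral_const_mul]
    _ ≤ 2 * (B ^ 2 * (∫ x, w x ^ 2 ∂ν) / n) + 2 * B ^ 2 * ((∫ x, w x ^ 2 ∂ν) / n) := by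
        gcongr
        exact hT.trans (by gcongr)
    _ = 4 * B ^ 2 * (∫ x, w x ^ 2 ∂ν) / n := by ring

end MeanSquareError

theorem statement4_general {X : Type*} [MeasurableSpace X] (μ : Measure X)
    (pd q : X → ℝ) (Z : ℝ) (hZ : 0 < Z)
    (Pi : X → ℝ) (hPi : Pi = fun x => Z * pd x)
    (hpdm : Measurable pd) (hqm : Measurable q)
    (hpd0 : ∀ x, 0 ≤ pd x) (hq0 : ∀ x, 0 ≤ q x)
    (hpd1 : ∫ x, pd x ∂μ = 1)
    (habs : ∀ x, 0 < pd x → 0 < q x)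
    (ν : Measure X) (hν : ν = μ.withDensity (fun x => ENNReal.ofReal (q x)))
    (hW2 : Integrable (fun x => (Pi x / q x) ^ 2) ν)
    (φ : X → ℝ) (hφm : Measurable φ) (B : ℝ) (hB : ∀ x, |φ x| ≤ B)
    (N : ℕ) (hN : 0 < N)
    {Ω : Type*} [MeasurableSpace Ω] (P : Measure Ω) [IsProbabilityMeasure P]
    (Xs : Fin N → Ω → X) (hXm : ∀ i, Measurable (Xs i))
    (hiid : iIndepFun Xs P)
    (hlaw : ∀ i, Measure.map (Xs i) P = ν) :
    (∫ ω, ((∫ x, φ x * pd x ∂μ)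
        - ∑ i, (Pi (Xs i ω) / q (Xs i ω)) / (∑ j, Pi (Xs j ω) / q (Xs j ω))
            * φ (Xs i ω)) ^ 2 ∂P)
      ≤ 4 * B ^ 2 * (∫ x, (pd x / q x) ^ 2 ∂ν) / N := by
  have hpq (x : X) (hx : q x = 0) : pd x = 0 :=
    (hpd0 x).eq_or_lt.elim Eq.symm fun hpos => absurd hx (habs x hpos).ne'
  have hwL2 : MemLp (fun x => pd x / q x) 2 ν := by
    refine (memLp_two_iff_integrable_sq (hpdm.div hqm).aestronglyMeasurable).mpr
      ((integrable_const_mul_iff (pow_ne_zero 2 hZ.ne').isUnit _).mp ?_)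
    simpa [hPi, mul_div_assoc, mul_pow] using hW2
  have hw1 : ∫ x, pd x / q x ∂ν = 1 := by
    simpa [hν, hpd1] using integral_div_mul_withDensity (μ := μ) hqm hq0 hpq fun _ => 1
  have hmean : ∫ x, pd x / q x * φ x ∂ν = ∫ x, φ x * pd x ∂μ :=
    hν ▸ integral_div_mul_withDensity hqm hq0 hpq φ
  have hestimate (ω : Ω) :
      ∑ i, Pi (Xs i ω) / q (Xs i ω) / (∑ j, Pi (Xs j ω) / q (Xs j ω)) * φ (Xs i ω)
        = selfNormalizedSum (fun i => pd (Xs i ω) / q (Xs i ω)) fun i => φ (Xs i ω) := by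
    rw [← selfNormalizedSum_const_mul hZ.ne']
    simp only [selfNormalizedSum, hPi, mul_div_assoc]
  have : Nonempty (Fin N) := ⟨⟨0, hN⟩⟩
  simpa only [hestimate, hmean, Fintype.card_fin] using
    integral_sq_sub_selfNormalizedSum_le (w := fun x => pd x / q x) (fun i => ⟨hXm i, hlaw i⟩)
      hiid (hpdm.div hqm) (fun x => div_nonneg (hpd0 x) (hq0 x)) hwL2 hw1 hφm hB

/-- Let `Π = Z·π` be an unnormalised density (`Z > 0`, `π` a probability
density), `q` a proposal density with `E_q[(Π/q)²] < ∞`, and `x⁽¹⁾,…,x⁽ᴺ⁾` i.i.d. from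
`q`. With self-normalised weights `𝗐⁽ⁱ⁾ = W(x⁽ⁱ⁾)/∑ⱼW(x⁽ʲ⁾)`, `W = Π/q`, for any
bounded `φ`: `E[((φ,π) − ∑ᵢ 𝗐⁽ⁱ⁾φ(x⁽ⁱ⁾))²] ≤ 4‖φ‖_∞² ρ / N` where `ρ = E_q[π²/q²]`. -/
theorem statement4 {X : Type*} [MeasurableSpace X] (μ : Measure X)
    (pd q : X → ℝ) (Z : ℝ) (hZ : 0 < Z)
    (Pi : X → ℝ) (hPi : Pi = fun x => Z * pd x)
    (hpdm : Measurable pd) (hqm : Measurable q)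
    (hpd0 : ∀ x, 0 ≤ pd x) (hq0 : ∀ x, 0 ≤ q x)
    (hpd1 : ∫ x, pd x ∂μ = 1) (hq1 : ∫ x, q x ∂μ = 1)
    (habs : ∀ x, 0 < pd x → 0 < q x)
    (ν : Measure X) (hν : ν = μ.withDensity (fun x => ENNReal.ofReal (q x)))
    (hW2 : Integrable (fun x => (Pi x / q x) ^ 2) ν)
    (φ : X → ℝ) (hφm : Measurable φ) (B : ℝ) (hB : ∀ x, |φ x| ≤ B)
    (N : ℕ) (hN : 0 < N)
    {Ω : Type*} [MeasurableSpace Ω] (P : Measure Ω) [IsProbabilityMeasure P]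
    (Xs : Fin N → Ω → X) (hXm : ∀ i, Measurable (Xs i))
    (hiid : iIndepFun Xs P)
    (hlaw : ∀ i, Measure.map (Xs i) P = ν) :
    (∫ ω, ((∫ x, φ x * pd x ∂μ)
        - ∑ i, (Pi (Xs i ω) / q (Xs i ω)) / (∑ j, Pi (Xs j ω) / q (Xs j ω))
            * φ (Xs i ω)) ^ 2 ∂P)
      ≤ 4 * B ^ 2 * (∫ x, (pd x / q x) ^ 2 ∂ν) / N :=
  statement4_general μ pd q Z hZ Pi hPi hpdm hqm hpd0 hq0 hpd1 habs ν hν hW2 φ hφm B hB N hN P Xs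
    hXm hiid hlaw
end

section
/- Under the setting of the averaged-iterate stochastic gradient OAIS with unnormalised target (constants C₁,…,C₄ as in the MSE theorem), the bias of the SNIS estimator with proposal q_{θ̄_t} satisfies |E[(φ,π_{θ̄_t}^N)] − (φ,π)| ≤ 3C₁/(√tN) + 3C₂/(√tN²) + 3C₃/(√tN) + 3C₄/N. -/
open MeasureTheory ProbabilityTheory

/-!
Averaging the pointwise bias bound `|bias θ| ≤ (12‖φ‖_∞²/N) ρ(θ)` over the law of `θ̄_t` bounds
the bias by `(12‖φ‖_∞²/N) E[ρ(θ̄_t)] = (3c_φ/N) (E[ρ(θ̄_t) − ρ*] + ρ*)`, and the averaged SGD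
bound on `E[ρ(θ̄_t) − ρ*]` then produces the four terms.
-/

lemma abs_integral_le_mul_integral_of_abs_le {Ω : Type*} [MeasurableSpace Ω] {μ : Measure Ω}
    {f g : Ω → ℝ} {c : ℝ} (hg : Integrable g μ) (hfg : ∀ ω, |f ω| ≤ c * g ω) :
    |∫ ω, f ω ∂μ| ≤ c * ∫ ω, g ω ∂μ := by
  rw [← integral_const_mul]
  exact norm_integral_le_of_norm_le (hg.const_mul c) (.of_forall fun ω => (Real.norm_eq_abs _).trans_le (hfg ω))

lemma integral_le_add_of_integral_sub_le {Ω : Type*} [MeasurableSpace Ω] {μ : Measure Ω}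
    [IsProbabilityMeasure μ] {f : Ω → ℝ} {a b : ℝ} (hf : Integrable f μ)
    (h : ∫ ω, (f ω - a) ∂μ ≤ b) : ∫ ω, f ω ∂μ ≤ b + a := by
  rw [integral_sub hf (integrable_const a), integral_const, probReal_univ, one_smul] at h
  linarith

theorem statement18_general {d : ℕ} {Ω : Type*} [m0 : MeasurableSpace Ω]
    (P : Measure Ω) [IsProbabilityMeasure P]
    (Θ : Set (EuclideanSpace ℝ (Fin d)))
    (ρ : EuclideanSpace ℝ (Fin d) → ℝ)
    (θstar : EuclideanSpace ℝ (Fin d))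
    (ρstar : ℝ)
    (Zπ : ℝ)
    (β : ℝ)
    (cR DPi GR : ℝ) (N : ℕ)
    (θ0 : Ω → EuclideanSpace ℝ (Fin d))
    (θbar : ℕ → Ω → EuclideanSpace ℝ (Fin d))
    (hθbarΘ : ∀ t ω, θbar t ω ∈ Θ)
    -- the averaged-SGD convergence bound for ρ (Lemma on averaged SGD iterates)
    (hSGD : ∀ t : ℕ, 0 < t →
      (∫ ω, (ρ (θbar t ω) - ρstar) ∂P) ≤
        (∫ ω, ‖θ0 ω - θstar‖ ^ 2 ∂P) / (2 * β * Zπ ^ 2 * Real.sqrt t)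
          + β * d * cR * DPi / (Zπ ^ 2 * Real.sqrt t * N)
          + β * GR ^ 2 / (Zπ ^ 2 * Real.sqrt t))
    -- the pointwise SNIS bias bound with constant 12‖φ‖_∞² = 3 c_φ
    (B : ℝ)
    (cφ : ℝ) (hcφ : cφ = 4 * B ^ 2)
    (bias : EuclideanSpace ℝ (Fin d) → ℝ)
    (hbias : ∀ ϑ ∈ Θ, |bias ϑ| ≤ 12 * B ^ 2 * ρ ϑ / N)
    (hρint : ∀ t, Integrable (fun ω => ρ (θbar t ω)) P)
    (C1 C2 C3 C4 : ℝ)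
    (hC1 : C1 = cφ * (∫ ω, ‖θ0 ω - θstar‖ ^ 2 ∂P) / (2 * β * Zπ ^ 2))
    (hC2 : C2 = cφ * β * cR * d * DPi / Zπ ^ 2)
    (hC3 : C3 = cφ * β * GR ^ 2 / Zπ ^ 2)
    (hC4 : C4 = cφ * ρstar) :
    ∀ t : ℕ, 0 < t →
      |∫ ω, bias (θbar t ω) ∂P| ≤
        3 * C1 / (Real.sqrt t * N) + 3 * C2 / (Real.sqrt t * N ^ 2)
          + 3 * C3 / (Real.sqrt t * N) + 3 * C4 / N := by
  intro t ht
  have hbias_mean : |∫ ω, bias (θbar t ω) ∂P| ≤ 12 * B ^ 2 / N * ∫ ω, ρ (θbar t ω) ∂P :=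
    abs_integral_le_mul_integral_of_abs_le (hρint t) fun ω => by
      rw [← mul_div_right_comm]
      exact hbias _ (hθbarΘ t ω)
  have hρ_mean := integral_le_add_of_integral_sub_le (hρint t) (hSGD t ht)
  calc |∫ ω, bias (θbar t ω) ∂P|
      ≤ 12 * B ^ 2 / N * ∫ ω, ρ (θbar t ω) ∂P := hbias_mean
    _ ≤ 12 * B ^ 2 / N * ((∫ ω, ‖θ0 ω - θstar‖ ^ 2 ∂P) / (2 * β * Zπ ^ 2 * Real.sqrt t)
          + β * d * cR * DPi / (Zπ ^ 2 * Real.sqrt t * N)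
          + β * GR ^ 2 / (Zπ ^ 2 * Real.sqrt t) + ρstar) := by gcongr
    _ = 3 * C1 / (Real.sqrt t * N) + 3 * C2 / (Real.sqrt t * N ^ 2)
          + 3 * C3 / (Real.sqrt t * N) + 3 * C4 / N := by
      subst hC1 hC2 hC3 hC4 hcφ
      ring

/-- Under the setting of the averaged-iterate stochastic gradient OAIS
with unnormalised target (constants `C₁,…,C₄` as in the MSE theorem:
`C₁ = c_φ E‖θ₀−θ*‖²/(2βZ_π²)`, `C₂ = c_φ β c_R d_θ D_Π/Z_π²`, `C₃ = c_φ β G_R²/Z_π²`,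
`C₄ = c_φ ρ*`, `c_φ = 4‖φ‖_∞²`), the bias of the SNIS estimator with proposal
`q_{θ̄_t}` satisfies
`|E[(φ,π^N_{θ̄_t})] − (φ,π)| ≤ 3C₁/(√t N) + 3C₂/(√t N²) + 3C₃/(√t N) + 3C₄/N`.
The pointwise SNIS bias bound `|E[(φ,π_θ^N)|θ] − (φ,π)| ≤ 12‖φ‖_∞² ρ(θ)/N` is encoded
by the function `bias`, and the averaged SGD bound on `E[ρ(θ̄_t) − ρ*]` is assumed. -/
theorem statement18 {d : ℕ} {Ω : Type*} {Y : Type*} [m0 : MeasurableSpace Ω]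
    (P : Measure Ω) [IsProbabilityMeasure P]
    (Θ : Set (EuclideanSpace ℝ (Fin d))) (hΘconv : Convex ℝ Θ) (hΘcomp : IsCompact Θ)
    (ρ : EuclideanSpace ℝ (Fin d) → ℝ)
    (θstar : EuclideanSpace ℝ (Fin d)) (hθstar : θstar ∈ Θ)
    (hmin : ∀ θ ∈ Θ, ρ θstar ≤ ρ θ)
    (ρstar : ℝ) (hρstar : ρstar = ρ θstar)
    (Zπ : ℝ) (hZπ : 0 < Zπ)
    (β : ℝ) (hβ : 0 < β)
    (cR DPi GR : ℝ) (N : ℕ) (hN : 0 < N)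
    (θ0 : Ω → EuclideanSpace ℝ (Fin d))
    (θbar : ℕ → Ω → EuclideanSpace ℝ (Fin d))
    (hθbarΘ : ∀ t ω, θbar t ω ∈ Θ)
    -- the averaged-SGD convergence bound for ρ (Lemma on averaged SGD iterates)
    (hSGD : ∀ t : ℕ, 0 < t →
      (∫ ω, (ρ (θbar t ω) - ρstar) ∂P) ≤
        (∫ ω, ‖θ0 ω - θstar‖ ^ 2 ∂P) / (2 * β * Zπ ^ 2 * Real.sqrt t)
          + β * d * cR * DPi / (Zπ ^ 2 * Real.sqrt t * N)
          + β * GR ^ 2 / (Zπ ^ 2 * Real.sqrt t))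
    -- the pointwise SNIS bias bound with constant 12‖φ‖_∞² = 3 c_φ
    (φ : Y → ℝ) (B : ℝ) (hB : ∀ y, |φ y| ≤ B)
    (cφ : ℝ) (hcφ : cφ = 4 * B ^ 2)
    (bias : EuclideanSpace ℝ (Fin d) → ℝ)
    (hbias : ∀ ϑ ∈ Θ, |bias ϑ| ≤ 12 * B ^ 2 * ρ ϑ / N)
    (hbiasint : ∀ t, Integrable (fun ω => bias (θbar t ω)) P)
    (hρint : ∀ t, Integrable (fun ω => ρ (θbar t ω)) P)
    (C1 C2 C3 C4 : ℝ)
    (hC1 : C1 = cφ * (∫ ω, ‖θ0 ω - θstar‖ ^ 2 ∂P) / (2 * β * Zπ ^ 2))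
    (hC2 : C2 = cφ * β * cR * d * DPi / Zπ ^ 2)
    (hC3 : C3 = cφ * β * GR ^ 2 / Zπ ^ 2)
    (hC4 : C4 = cφ * ρstar) :
    ∀ t : ℕ, 0 < t →
      |∫ ω, bias (θbar t ω) ∂P| ≤
        3 * C1 / (Real.sqrt t * N) + 3 * C2 / (Real.sqrt t * N ^ 2)
          + 3 * C3 / (Real.sqrt t * N) + 3 * C4 / N :=
  statement18_general (m0 := m0) P Θ ρ θstar ρstar Zπ β cR DPi GR N θ0 θbar hθbarΘ hSGD B cφ hcφ
    bias hbias hρint C1 C2 C3 C4 hC1 hC2 hC3 hC4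
end
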